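/- Let P : H → K be a compact linear operator between Hilbert spaces. Then for each n, the Kolmogorov n-width d_n = inf over n-dimensional subspaces S of K of sup_{‖u‖_H ≤ 1} inf_{v ∈ S} ‖Pu − v‖_K equals the (n+1)-st singular value σ_{n+1} of P, and the optimal subspace is spanned by the first n left singular vectors of P. -/

import Mathlib

open RealInnerProductSpace Submodule

/-!
Expanding in the right singular vectors, `‖P u‖² = ∑ σ_j² ⟪φ_j, u⟫²`. Subtracting from `u` its
projection onto `span {φ_j | j < n}` moves `P u` by an element of
`span {P φ_j | j < n}` and leaves `‖P u - v‖ ≤ σ_n ‖u‖`. Conversely, if `dim S ≤ n` then the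
`(n+1)`-dimensional space `span {φ_j | j ≤ n}` contains some `u ≠ 0` with `P u ⊥ S`
(dimension count), so `dist (P u, S) = ‖P u‖ ≥ σ_n ‖u‖`.
-/

section InnerProductSpace

variable {E : Type*} [NormedAddCommGroup E] [InnerProductSpace ℝ E]

theorem inner_eq_zero_of_mem_span {s : Set E} {x y : E} (h : ∀ z ∈ s, ⟪x, z⟫ = 0)
    (hy : y ∈ span ℝ s) : ⟪x, y⟫ = 0 :=
  mem_orthogonal_singleton_iff_inner_right.1 <|
    span_le.2 (fun z hz => mem_orthogonal_singleton_iff_inner_right.2 (h z hz)) hy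

theorem infDist_eq_norm_of_mem_orthogonal {K : Submodule ℝ E} {y : E} (hy : y ∈ Kᗮ) :
    Metric.infDist y K = ‖y‖ := by
  refine le_antisymm ?_ ((Metric.le_infDist ⟨0, K.zero_mem⟩).2 fun v hv => ?_)
  · simpa using Metric.infDist_le_dist_of_mem (x := y) K.zero_mem
  · have hyv : ⟪y, v⟫ = 0 := inner_left_of_mem_orthogonal hv hy
    rw [dist_eq_norm, ← sq_le_sq₀ (norm_nonneg _) (norm_nonneg _), norm_sub_sq_real, hyv]
    nlinarith [sq_nonneg ‖v‖]

variable [CompleteSpace E] {ι : Type*} {φ : ι → E}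

theorem Orthonormal.hasSum_inner_smul_starProjection (hφ : Orthonormal ℝ φ) (x : E) :
    HasSum (fun i => ⟪φ i, x⟫ • φ i)
      ((span ℝ (Set.range φ)).topologicalClosure.starProjection x) := by
  set U := (span ℝ (Set.range φ)).topologicalClosure
  let ψ : ι → U := fun i => ⟨φ i, le_topologicalClosure _ (subset_span ⟨i, rfl⟩)⟩
  have hψ : Orthonormal ℝ ψ := ⟨hφ.1, fun _ _ hij => hφ.2 hij⟩
  have hψ_total : (span ℝ (Set.range ψ))ᗮ = ⊥ := by
    refine eq_bot_iff.2 fun y hy => ?_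
    have hy' : (y : E) ∈ Uᗮ := by
      rw [orthogonal_closure, mem_orthogonal']
      refine fun u hu => inner_eq_zero_of_mem_span ?_ hu
      rintro _ ⟨i, rfl⟩
      rw [real_inner_comm]
      exact hy (ψ i) (subset_span ⟨i, rfl⟩)
    exact Subtype.ext (inner_self_eq_zero.1 (hy' y y.2))
  simpa [ψ] using
    ((HilbertBasis.mkOfOrthogonalEqBot hψ hψ_total).hasSum_orthogonalProjectionOnto x).mapL
      U.subtypeL

theorem Orthonormal.hasSum_inner_sq (hφ : Orthonormal ℝ φ) {x : E}
    (hx : x ∈ (span ℝ (Set.range φ)).topologicalClosure) :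
    HasSum (fun i => ⟪φ i, x⟫ ^ 2) (‖x‖ ^ 2) := by
  have h := (hφ.hasSum_inner_smul_starProjection x).mapL (innerSL ℝ x)
  simpa [starProjection_eq_self_iff.2 hx, real_inner_smul_right, real_inner_comm x, sq] using h

end InnerProductSpace

section KolmogorovDeviation

variable {H K : Type*} [NormedAddCommGroup H] [NormedSpace ℝ H]
  [NormedAddCommGroup K] [NormedSpace ℝ K]

noncomputable def kolmogorovDeviation (P : H →L[ℝ] K) (S : Submodule ℝ K) : ℝ :=
  ⨆ u : {u : H // ‖u‖ ≤ 1}, ⨅ v : S, ‖P u.1 - (v : K)‖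

theorem iInf_norm_sub_eq_infDist (y : K) (S : Submodule ℝ K) :
    ⨅ v : S, ‖y - (v : K)‖ = Metric.infDist y S := by
  simp [Metric.infDist_eq_iInf, dist_eq_norm]

variable {P : H →L[ℝ] K} {S : Submodule ℝ K}

theorem infDist_le_kolmogorovDeviation {u : H} (hu : ‖u‖ ≤ 1) :
    Metric.infDist (P u) S ≤ kolmogorovDeviation P S := by
  have hbdd : BddAbove (Set.range fun u : {u : H // ‖u‖ ≤ 1} => Metric.infDist (P u) S) := by
    refine ⟨‖P‖, ?_⟩
    rintro _ ⟨u, rfl⟩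
    calc Metric.infDist (P u) S ≤ dist (P u) 0 := Metric.infDist_le_dist_of_mem S.zero_mem
      _ ≤ ‖P‖ := by simpa using P.unit_le_opNorm u u.2
  simp only [kolmogorovDeviation, iInf_norm_sub_eq_infDist]
  exact le_ciSup (f := fun u : {u : H // ‖u‖ ≤ 1} => Metric.infDist (P u) S) hbdd ⟨u, hu⟩

theorem kolmogorovDeviation_le {r : ℝ} (h : ∀ u : H, ‖u‖ ≤ 1 → Metric.infDist (P u) S ≤ r) :
    kolmogorovDeviation P S ≤ r := by
  have : Nonempty {u : H // ‖u‖ ≤ 1} := ⟨⟨0, by simp⟩⟩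
  simp only [kolmogorovDeviation, iInf_norm_sub_eq_infDist]
  exact ciSup_le fun u => h u u.2

end KolmogorovDeviation

section DimensionCount

variable {E F : Type*} [NormedAddCommGroup E] [InnerProductSpace ℝ E]
  [NormedAddCommGroup F] [InnerProductSpace ℝ F]

theorem exists_ne_zero_mem_map_mem_orthogonal (T : E →ₗ[ℝ] F) {V : Submodule ℝ E}
    {S : Submodule ℝ F} [FiniteDimensional ℝ V] [FiniteDimensional ℝ S]
    (h : Module.finrank ℝ S < Module.finrank ℝ V) : ∃ u ∈ V, u ≠ 0 ∧ T u ∈ Sᗮ := by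
  let f : V →ₗ[ℝ] S := S.orthogonalProjectionOnto.toLinearMap ∘ₗ T ∘ₗ V.subtype
  obtain ⟨x, hx, hx0⟩ := (LinearMap.ker f).ne_bot_iff.1 (LinearMap.ker_ne_bot_of_finrank_lt h)
  exact ⟨x, x.2, by simpa using hx0, orthogonalProjectionOnto_eq_zero_iff.1 hx⟩

end DimensionCount

section SingularSystem

variable {H K : Type*} [NormedAddCommGroup H] [InnerProductSpace ℝ H] [CompleteSpace H]
  [NormedAddCommGroup K] [InnerProductSpace ℝ K]
  {P : H →L[ℝ] K} {σ : ℕ → ℝ} {φ : ℕ → H}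

theorem hasSum_inner_smul_map (hφ : Orthonormal ℝ φ)
    (hspan : (span ℝ (Set.range φ)).topologicalClosure = (LinearMap.ker (P : H →ₗ[ℝ] K))ᗮ)
    (u : H) : HasSum (fun j => ⟪φ j, u⟫ • P (φ j)) (P u) := by
  set U := (span ℝ (Set.range φ)).topologicalClosure
  have hU_orthogonal : Uᗮ = LinearMap.ker (P : H →ₗ[ℝ] K) := by
    rw [hspan, orthogonal_orthogonal_eq_closure]
    exact (ContinuousLinearMap.isClosed_ker P).submodule_topologicalClosure_eq
  have hPu : P (U.starProjection u) = P u := by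
    have h := hU_orthogonal ▸ sub_starProjection_mem_orthogonal (K := U) u
    rw [LinearMap.mem_ker, ContinuousLinearMap.coe_coe, map_sub, sub_eq_zero] at h
    exact h.symm
  rw [← hPu]
  simpa using (hφ.hasSum_inner_smul_starProjection u).mapL P

variable [CompleteSpace K]

theorem inner_map_map_eq_ite (hφ : Orthonormal ℝ φ)
    (heig : ∀ j, (ContinuousLinearMap.adjoint P) (P (φ j)) = (σ j ^ 2) • φ j) (i j : ℕ) :
    ⟪P (φ i), P (φ j)⟫ = if i = j then σ j ^ 2 else 0 := by
  rw [← ContinuousLinearMap.adjoint_inner_right, heig, real_inner_smul_right,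
    orthonormal_iff_ite.1 hφ]
  split_ifs <;> simp

theorem finrank_span_image_Iio (hφ : Orthonormal ℝ φ)
    (heig : ∀ j, (ContinuousLinearMap.adjoint P) (P (φ j)) = (σ j ^ 2) • φ j)
    (hσ : ∀ j, σ j ≠ 0) (n : ℕ) :
    Module.finrank ℝ (span ℝ ((fun j => P (φ j)) '' Set.Iio n)) = n := by
  have hli : LinearIndependent ℝ ((fun j => P (φ j)) ∘ Fin.val : Fin n → K) := by
    refine linearIndependent_of_ne_zero_of_inner_eq_zero (fun i hi => hσ i ?_) fun i j hij => ?_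
    · rw [Function.comp_apply] at hi
      simpa [hi, eq_comm] using inner_map_map_eq_ite hφ heig i i
    · simpa [Fin.val_injective.ne hij] using inner_map_map_eq_ite hφ heig i j
  rw [← Fin.range_val, ← Set.range_comp, finrank_span_eq_card hli, Fintype.card_fin]

structure IsSingularSystem (P : H →L[ℝ] K) (σ : ℕ → ℝ) (φ : ℕ → H) : Prop where
  orthonormal : Orthonormal ℝ φ
  adjoint_map_apply : ∀ j, (ContinuousLinearMap.adjoint P) (P (φ j)) = (σ j ^ 2) • φ j
  closure_span_eq : (span ℝ (Set.range φ)).topologicalClosure = (LinearMap.ker (P : H →ₗ[ℝ] K))ᗮ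

namespace IsSingularSystem

theorem hasSum_sq_mul_inner_sq (hs : IsSingularSystem P σ φ) (u : H) :
    HasSum (fun j => σ j ^ 2 * ⟪φ j, u⟫ ^ 2) (‖P u‖ ^ 2) := by
  have h := (hasSum_inner_smul_map hs.orthonormal hs.closure_span_eq u).mapL (innerSL ℝ (P u))
  simpa [← ContinuousLinearMap.adjoint_inner_right, hs.adjoint_map_apply, real_inner_smul_right,
    real_inner_comm u, sq, mul_left_comm, mul_comm] using h

theorem norm_map_le_of_inner_eq_zero (hs : IsSingularSystem P σ φ) (hσ : ∀ j, 0 ≤ σ j)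
    (hanti : Antitone σ) {n : ℕ} {u : H} (hu : ∀ j < n, ⟪φ j, u⟫ = 0) :
    ‖P u‖ ≤ σ n * ‖u‖ := by
  have hbessel : ∑' j, ⟪φ j, u⟫ ^ 2 ≤ ‖u‖ ^ 2 := by
    simpa only [Real.norm_eq_abs, sq_abs] using hs.orthonormal.tsum_inner_products_le u
  have hsummable : Summable fun j => ⟪φ j, u⟫ ^ 2 := by
    simpa only [Real.norm_eq_abs, sq_abs] using hs.orthonormal.inner_products_summable u
  have hPu := hs.hasSum_sq_mul_inner_sq u
  refine le_of_pow_le_pow_left₀ two_ne_zero (mul_nonneg (hσ n) (norm_nonneg u)) ?_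
  calc ‖P u‖ ^ 2 = ∑' j, σ j ^ 2 * ⟪φ j, u⟫ ^ 2 := hPu.tsum_eq.symm
    _ ≤ ∑' j, σ n ^ 2 * ⟪φ j, u⟫ ^ 2 := by
      refine hPu.summable.tsum_le_tsum (fun j => ?_) (hsummable.mul_left _)
      rcases lt_or_ge j n with hj | hj
      · simp [hu j hj]
      · gcongr
        · exact hσ j
        · exact hanti hj
    _ = σ n ^ 2 * ∑' j, ⟪φ j, u⟫ ^ 2 := tsum_mul_left
    _ ≤ (σ n * ‖u‖) ^ 2 := by rw [mul_pow]; gcongr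

theorem mul_norm_le_norm_map (hs : IsSingularSystem P σ φ) (hanti : Antitone σ) {n : ℕ}
    (hσn : 0 ≤ σ n) {u : H} (hu_mem : u ∈ (span ℝ (Set.range φ)).topologicalClosure)
    (hu : ∀ j, n < j → ⟪φ j, u⟫ = 0) :
    σ n * ‖u‖ ≤ ‖P u‖ := by
  refine le_of_pow_le_pow_left₀ two_ne_zero (norm_nonneg _) ?_
  rw [mul_pow]
  refine hasSum_le (fun j => ?_) ((hs.orthonormal.hasSum_inner_sq hu_mem).mul_left _)
    (hs.hasSum_sq_mul_inner_sq u)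
  rcases lt_or_ge n j with hj | hj
  · simp [hu j hj]
  · gcongr
    exact hanti hj

theorem le_kolmogorovDeviation_of_finrank_le (hs : IsSingularSystem P σ φ) (hanti : Antitone σ)
    {n : ℕ} (hσn : 0 ≤ σ n) {S : Submodule ℝ K} [FiniteDimensional ℝ S]
    (hS : Module.finrank ℝ S ≤ n) : σ n ≤ kolmogorovDeviation P S := by
  set V := span ℝ (Set.range (φ ∘ Fin.val : Fin (n + 1) → H))
  have : FiniteDimensional ℝ V := FiniteDimensional.span_of_finite ℝ (Set.finite_range _)
  have hV : Module.finrank ℝ V = n + 1 := by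
    rw [finrank_span_eq_card (hs.orthonormal.comp _ Fin.val_injective).linearIndependent,
      Fintype.card_fin]
  obtain ⟨u, huV, hu0, hPu⟩ :=
    exists_ne_zero_mem_map_mem_orthogonal (P : H →ₗ[ℝ] K) (V := V) (S := S) (by omega)
  have hu_mem : u ∈ (span ℝ (Set.range φ)).topologicalClosure :=
    le_topologicalClosure _ (span_mono (Set.range_comp_subset_range _ _) huV)
  have hu_perp : ∀ j, n < j → ⟪φ j, u⟫ = 0 := by
    refine fun j hj => inner_eq_zero_of_mem_span ?_ huV
    rintro _ ⟨i, rfl⟩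
    exact hs.orthonormal.inner_eq_zero (by omega)
  have hσu : σ n * ‖u‖ ≤ ‖P u‖ := hs.mul_norm_le_norm_map hanti hσn hu_mem hu_perp
  have hu_pos : 0 < ‖u‖ := norm_pos_iff.2 hu0
  set x := ‖u‖⁻¹ • u
  have hx : ‖x‖ ≤ 1 := by simp [x, norm_smul, hu_pos.ne']
  have hPx : P x ∈ Sᗮ := by simpa [x] using Sᗮ.smul_mem ‖u‖⁻¹ hPu
  calc σ n ≤ ‖P x‖ := by
        rw [map_smul, norm_smul, norm_inv, norm_norm, le_inv_mul_iff₀ hu_pos, mul_comm]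
        exact hσu
    _ = Metric.infDist (P x) S := (infDist_eq_norm_of_mem_orthogonal hPx).symm
    _ ≤ kolmogorovDeviation P S := infDist_le_kolmogorovDeviation hx

theorem kolmogorovDeviation_span_image_Iio_le (hs : IsSingularSystem P σ φ) (hσ : ∀ j, 0 ≤ σ j)
    (hanti : Antitone σ) (n : ℕ) :
    kolmogorovDeviation P (span ℝ ((fun j => P (φ j)) '' Set.Iio n)) ≤ σ n := by
  set W := span ℝ (φ '' Set.Iio n)
  have : FiniteDimensional ℝ W :=
    FiniteDimensional.span_of_finite ℝ ((Set.finite_Iio n).image _)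
  have hW : span ℝ ((fun j => P (φ j)) '' Set.Iio n) = W.map (P : H →ₗ[ℝ] K) := by
    rw [map_span, Set.image_image]
    rfl
  refine kolmogorovDeviation_le fun u hu => ?_
  set w := W.starProjection u
  have hPw : P w ∈ span ℝ ((fun j => P (φ j)) '' Set.Iio n) :=
    hW ▸ mem_map_of_mem (W.starProjection_apply_mem u)
  have hperp : ∀ j < n, ⟪φ j, u - w⟫ = 0 := fun j hj =>
    inner_right_of_mem_orthogonal (subset_span (Set.mem_image_of_mem φ hj))
      (W.sub_starProjection_mem_orthogonal u)
  have hnorm : ‖u - w‖ ≤ 1 := by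
    rw [← starProjection_orthogonal_val]
    exact (norm_starProjection_apply_le _ u).trans hu
  calc Metric.infDist (P u) _ ≤ ‖P (u - w)‖ := by
        simpa [dist_eq_norm] using Metric.infDist_le_dist_of_mem hPw
    _ ≤ σ n * ‖u - w‖ := hs.norm_map_le_of_inner_eq_zero hσ hanti hperp
    _ ≤ σ n := mul_le_of_le_one_right (hσ n) hnorm

end IsSingularSystem

end SingularSystem

/- `σ` is indexed from `0`, so `σ n` is the paper's `σ_{n+1}`. -/
theorem kolmogorov_nwidth_eq_singular_value_general
    {H K : Type*}
    [NormedAddCommGroup H] [InnerProductSpace ℝ H] [CompleteSpace H]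
    [NormedAddCommGroup K] [InnerProductSpace ℝ K] [CompleteSpace K]
    (P : H →L[ℝ] K)
    (σ : ℕ → ℝ) (φ : ℕ → H)
    (hσpos : ∀ j, 0 < σ j) (hσanti : Antitone σ)
    (hon : Orthonormal ℝ φ)
    (heig : ∀ j, (ContinuousLinearMap.adjoint P) (P (φ j)) = (σ j ^ 2) • φ j)
    (hspan : (Submodule.span ℝ (Set.range φ)).topologicalClosure = (LinearMap.ker (P : H →ₗ[ℝ] K))ᗮ)
    (n : ℕ) :
    IsGLB {r : ℝ | ∃ S : Submodule ℝ K, FiniteDimensional ℝ S ∧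
        Module.finrank ℝ S = n ∧
        r = ⨆ u : {u : H // ‖u‖ ≤ 1}, ⨅ v : S, ‖P u.1 - (v : K)‖} (σ n) ∧
    (⨆ u : {u : H // ‖u‖ ≤ 1},
        ⨅ v : (Submodule.span ℝ ((fun j => P (φ j)) '' Set.Iio n)),
          ‖P u.1 - (v : K)‖) = σ n := by
  have hs : IsSingularSystem P σ φ := ⟨hon, heig, hspan⟩
  have hσ : ∀ j, 0 ≤ σ j := fun j => (hσpos j).le
  set Sn := span ℝ ((fun j => P (φ j)) '' Set.Iio n)
  have hSn_fin : FiniteDimensional ℝ Sn :=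
    FiniteDimensional.span_of_finite ℝ ((Set.finite_Iio n).image _)
  have hSn_rank : Module.finrank ℝ Sn = n :=
    finrank_span_image_Iio hon heig (fun j => (hσpos j).ne') n
  have hlower : ∀ (S : Submodule ℝ K) [FiniteDimensional ℝ S], Module.finrank ℝ S = n →
      σ n ≤ kolmogorovDeviation P S := fun S _ hS =>
    hs.le_kolmogorovDeviation_of_finrank_le hσanti (hσ n) hS.le
  have hSn : kolmogorovDeviation P Sn = σ n :=
    le_antisymm (hs.kolmogorovDeviation_span_image_Iio_le hσ hσanti n) (hlower Sn hSn_rank)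
  refine ⟨IsLeast.isGLB ⟨⟨Sn, hSn_fin, hSn_rank, hSn.symm⟩, ?_⟩, hSn⟩
  rintro r ⟨S, hS_fin, hS_rank, rfl⟩
  exact hlower S hS_rank

/-- The Kolmogorov n-width of a compact operator between Hilbert spaces equals its
(n+1)-st singular value (here `σ j` is 0-indexed, so `σ n` is the (n+1)-st singular
value), and the optimal n-dimensional subspace is the span of the first n left
singular vectors of P. -/
theorem kolmogorov_nwidth_eq_singular_value
    {H K : Type*}
    [NormedAddCommGroup H] [InnerProductSpace ℝ H] [CompleteSpace H]
    [NormedAddCommGroup K] [InnerProductSpace ℝ K] [CompleteSpace K]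
    (P : H →L[ℝ] K) (hP : IsCompactOperator P)
    (σ : ℕ → ℝ) (φ : ℕ → H)
    (hσpos : ∀ j, 0 < σ j) (hσanti : Antitone σ)
    (hon : Orthonormal ℝ φ)
    (heig : ∀ j, (ContinuousLinearMap.adjoint P) (P (φ j)) = (σ j ^ 2) • φ j)
    (hspan : (Submodule.span ℝ (Set.range φ)).topologicalClosure = (LinearMap.ker (P : H →ₗ[ℝ] K))ᗮ)
    (n : ℕ) :
    IsGLB {r : ℝ | ∃ S : Submodule ℝ K, FiniteDimensional ℝ S ∧
        Module.finrank ℝ S = n ∧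
        r = ⨆ u : {u : H // ‖u‖ ≤ 1}, ⨅ v : S, ‖P u.1 - (v : K)‖} (σ n) ∧
    (⨆ u : {u : H // ‖u‖ ≤ 1},
        ⨅ v : (Submodule.span ℝ ((fun j => P (φ j)) '' Set.Iio n)),
          ‖P u.1 - (v : K)‖) = σ n :=
  kolmogorov_nwidth_eq_singular_value_general P σ φ hσpos hσanti hon heig hspan n
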